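/- arXiv:1801.06681 — 5 statements merged into one kernel-verified Lean document; each statement's English description precedes it below -/
import Mathlib

section
/- For any vector fields $X, Y$ and functions $f, h$ on $M$, the operators $\widetilde{\mathcal{L}}_{(X,f)} := i_{(X,f)} \circ \widetilde{d} + \widetilde{d} \circ i_{(X,f)}$ satisfy $\widetilde{\mathcal{L}}_{(X,f)} \circ i_{(Y,h)} - i_{(Y,h)} \circ \widetilde{\mathcal{L}}_{(X,f)} = i_{[(X,f),(Y,h)]}$, where $[(X,f),(Y,h)] = ([X,Y], X(h) - Y(f))$. -/
/-- Contraction of a pair of forms by `(X,f)`: `i_{(X,f)}(α,β) = (i_Xα + fβ, -i_Xβ)`.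
Vector fields on `M` are modelled as derivations of the algebra `A` of smooth
functions, forms as an abstract `A`-module `Ω` and `i X` is the interior product. -/
def pairContr {A : Type} [CommRing A] [Algebra ℝ A] {Ω : Type} [AddCommGroup Ω] [Module A Ω]
    (i : Derivation ℝ A A → Ω →ₗ[A] Ω) (Xf : Derivation ℝ A A × A) (p : Ω × Ω) : Ω × Ω :=
  (i Xf.1 p.1 + Xf.2 • p.2, - i Xf.1 p.2)

/-- `d̃(α,β) = (dα, α - dβ)`. -/
def pairD {Ω : Type} [AddCommGroup Ω] [Module ℝ Ω] (d : Ω →ₗ[ℝ] Ω) (p : Ω × Ω) : Ω × Ω :=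
  (d p.1, p.1 - d p.2)

/-- `L̃_{(X,f)} = i_{(X,f)} ∘ d̃ + d̃ ∘ i_{(X,f)}`. -/
def pairLie {A : Type} [CommRing A] [Algebra ℝ A] {Ω : Type} [AddCommGroup Ω] [Module ℝ Ω]
    [Module A Ω] (d : Ω →ₗ[ℝ] Ω) (i : Derivation ℝ A A → Ω →ₗ[A] Ω)
    (Xf : Derivation ℝ A A × A) (p : Ω × Ω) : Ω × Ω :=
  pairContr i Xf (pairD d p) + pairD d (pairContr i Xf p)

/-- `L̃_{(X,f)} ∘ i_{(Y,h)} - i_{(Y,h)} ∘ L̃_{(X,f)} = i_{([X,Y], X(h) - Y(f))}`,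
given the classical Cartan calculus identities for `d`, `i` and `L = i d + d i`. -/
theorem pairLie_contraction_commutator
    (A : Type) [CommRing A] [Algebra ℝ A]
    (Ω : Type) [AddCommGroup Ω] [Module ℝ Ω] [Module A Ω]
    (d : Ω →ₗ[ℝ] Ω)
    (i : Derivation ℝ A A → Ω →ₗ[A] Ω)
    (hd : ∀ ω : Ω, d (d ω) = 0)
    (hanti : ∀ (X Y : Derivation ℝ A A) (ω : Ω), i X (i Y ω) = - i Y (i X ω))
    (hLeib : ∀ (X : Derivation ℝ A A) (f : A) (ω : Ω),
      i X (d (f • ω)) + d (i X (f • ω)) = X f • ω + f • (i X (d ω) + d (i X ω)))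
    (hCartan : ∀ (X Y : Derivation ℝ A A) (ω : Ω),
      (i X (d (i Y ω)) + d (i X (i Y ω))) - i Y (i X (d ω) + d (i X ω)) = i ⁅X, Y⁆ ω)
    (X Y : Derivation ℝ A A) (f h : A) :
    ∀ p : Ω × Ω,
      pairLie d i (X, f) (pairContr i (Y, h) p) - pairContr i (Y, h) (pairLie d i (X, f) p)
        = pairContr i (⁅X, Y⁆, X h - Y f) p := by
  rintro ⟨α, β⟩
  have h1 := hCartan X Y α
  have h2 := hCartan X Y β
  have h3 := hLeib X h β
  have h4 := hLeib Y f β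
  simp only [map_smul, map_add] at h1 h2 h3 h4
  simp only [pairLie, pairD, pairContr, Prod.mk_add_mk, Prod.mk_sub_mk, map_add, map_sub,
    map_neg, map_smul, hd, Prod.mk.injEq, smul_neg, neg_neg, sub_zero, zero_sub, smul_sub,
    smul_add]
  constructor
  · linear_combination (norm := module) h1 + h3 - h4
  · linear_combination (norm := module) -h2
end

section
/- For any closed 2-form-like pair $(dB, B)$ with $B$ a 1-form, if $L$ is a Dirac-Jacobi structure then the gauge transform $\tau_B(L) = \{(X,f)\oplus((\alpha,g) + i_{(X,f)}(dB,B)) : (X,f)\oplus(\alpha,g) \in L\}$ is again maximally isotropic with respect to the pairing and its space of sections is closed under the generalized Dorfman bracket; hence $\tau_B(L)$ is a Dirac-Jacobi structure. -/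
/-! Abstract model of the Dirac–Jacobi calculus on `𝓔¹(M) = (TM × ℝ) ⊕ (T*M × ℝ)`:
`A` is the algebra of smooth functions, vector fields are derivations of `A`,
`Ω1, Ω2, Ω3` are the modules of 1-, 2- and 3-forms, `d` the de Rham differential
and `i` the interior products. -/

variable {A : Type} [CommRing A] [Algebra ℝ A]
variable {Ω1 Ω2 Ω3 : Type}
variable [AddCommGroup Ω1] [Module A Ω1] [Module ℝ Ω1]
variable [AddCommGroup Ω2] [Module A Ω2] [Module ℝ Ω2]
variable [AddCommGroup Ω3] [Module A Ω3] [Module ℝ Ω3]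

/-- Vector fields. -/
abbrev Vec (A : Type) [CommRing A] [Algebra ℝ A] := Derivation ℝ A A

/-- Sections of `𝓔¹(M) = (TM × ℝ) ⊕ (T*M × ℝ)`. -/
abbrev E1 (A : Type) [CommRing A] [Algebra ℝ A] (Ω1 : Type) [AddCommGroup Ω1]
    [Module A Ω1] := (Vec A × A) × (Ω1 × A)

/-- The symmetric pairing `⟨⟨(X,f)⊕(α,g), (Y,h)⊕(β,k)⟩⟩ = ½(β(X)+kf+α(Y)+gh)`. -/
noncomputable def djPair (i1 : Vec A → Ω1 →ₗ[A] A) (x y : E1 A Ω1) : A :=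
  (1/2 : ℝ) • (i1 x.1.1 y.2.1 + y.2.2 * x.1.2 + i1 y.1.1 x.2.1 + x.2.2 * y.1.2)

/-- `d̃(α,g) = (dα, α - dg)` on `Ω¹ × Ω⁰`. -/
def dtil1 (d0 : A →ₗ[ℝ] Ω1) (d1 : Ω1 →ₗ[ℝ] Ω2) (p : Ω1 × A) : Ω2 × Ω1 :=
  (d1 p.1, p.1 - d0 p.2)

/-- `i_{(X,f)}(ω,μ) = (i_Xω + fμ, -i_Xμ)` on `Ω² × Ω¹`. -/
def itil21 (i1 : Vec A → Ω1 →ₗ[A] A) (i2 : Vec A → Ω2 →ₗ[A] Ω1)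
    (Xf : Vec A × A) (p : Ω2 × Ω1) : Ω1 × A :=
  (i2 Xf.1 p.1 + Xf.2 • p.2, - i1 Xf.1 p.2)

/-- `L̃_{(X,f)} = i_{(X,f)} ∘ d̃ + d̃ ∘ i_{(X,f)}` on `Ω¹ × Ω⁰`. -/
def Ltil1 (d0 : A →ₗ[ℝ] Ω1) (d1 : Ω1 →ₗ[ℝ] Ω2)
    (i1 : Vec A → Ω1 →ₗ[A] A) (i2 : Vec A → Ω2 →ₗ[A] Ω1)
    (Xf : Vec A × A) (p : Ω1 × A) : Ω1 × A :=
  itil21 i1 i2 Xf (dtil1 d0 d1 p) +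
    (d0 (i1 Xf.1 p.1 + Xf.2 * p.2), i1 Xf.1 p.1 + Xf.2 * p.2)

/-- `L̃_{(X,f)} = i_{(X,f)} ∘ d̃ + d̃ ∘ i_{(X,f)}` on `Ω² × Ω¹`. -/
def Ltil2 (d0 : A →ₗ[ℝ] Ω1) (d1 : Ω1 →ₗ[ℝ] Ω2) (d2 : Ω2 →ₗ[ℝ] Ω3)
    (i1 : Vec A → Ω1 →ₗ[A] A) (i2 : Vec A → Ω2 →ₗ[A] Ω1) (i3 : Vec A → Ω3 →ₗ[A] Ω2)
    (Xf : Vec A × A) (p : Ω2 × Ω1) : Ω2 × Ω1 :=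
  (i3 Xf.1 (d2 p.1) + Xf.2 • (p.1 - d1 p.2), - i2 Xf.1 (p.1 - d1 p.2)) +
    dtil1 d0 d1 (itil21 i1 i2 Xf p)

/-- The generalized Dorfman bracket on sections of `𝓔¹(M)`. -/
def dorfman (d0 : A →ₗ[ℝ] Ω1) (d1 : Ω1 →ₗ[ℝ] Ω2)
    (i1 : Vec A → Ω1 →ₗ[A] A) (i2 : Vec A → Ω2 →ₗ[A] Ω1)
    (x y : E1 A Ω1) : E1 A Ω1 :=
  ((⁅x.1.1, y.1.1⁆, x.1.1 y.1.2 - y.1.1 x.1.2),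
    Ltil1 d0 d1 i1 i2 x.1 y.2 - itil21 i1 i2 y.1 (dtil1 d0 d1 x.2))

/-- A Dirac–Jacobi structure: a maximally isotropic subbundle whose sections are
closed under the generalized Dorfman bracket. -/
noncomputable def IsDiracJacobi (d0 : A →ₗ[ℝ] Ω1) (d1 : Ω1 →ₗ[ℝ] Ω2)
    (i1 : Vec A → Ω1 →ₗ[A] A) (i2 : Vec A → Ω2 →ₗ[A] Ω1)
    (L : Set (E1 A Ω1)) : Prop :=
  (∀ x ∈ L, ∀ y ∈ L, djPair i1 x y = 0) ∧
  (∀ x : E1 A Ω1, (∀ y ∈ L, djPair i1 x y = 0) → x ∈ L) ∧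
  (∀ x ∈ L, ∀ y ∈ L, dorfman d0 d1 i1 i2 x y ∈ L)

/-- The gauge shift `i_{(X,f)}(dB, B) = (i_X dB + fB, -B(X))`. -/
def gaugeShift (d1 : Ω1 →ₗ[ℝ] Ω2)
    (i1 : Vec A → Ω1 →ₗ[A] A) (i2 : Vec A → Ω2 →ₗ[A] Ω1)
    (B : Ω1) (Xf : Vec A × A) : Ω1 × A :=
  (i2 Xf.1 (d1 B) + Xf.2 • B, - i1 Xf.1 B)

/-- The gauge transformation `τ_B(L)` of a subbundle `L ⊆ 𝓔¹(M)` by a 1-form `B`. -/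
def tauDJ (d1 : Ω1 →ₗ[ℝ] Ω2)
    (i1 : Vec A → Ω1 →ₗ[A] A) (i2 : Vec A → Ω2 →ₗ[A] Ω1)
    (B : Ω1) (L : Set (E1 A Ω1)) : Set (E1 A Ω1) :=
  {x | ∃ y ∈ L, x = (y.1, y.2 + gaugeShift d1 i1 i2 B y.1)}


lemma gaugeShift_eq_itil (d1 : Ω1 →ₗ[ℝ] Ω2)
    (i1 : Vec A → Ω1 →ₗ[A] A) (i2 : Vec A → Ω2 →ₗ[A] Ω1)
    (B : Ω1) (Xf : Vec A × A) :
    gaugeShift d1 i1 i2 B Xf = itil21 i1 i2 Xf (d1 B, B) := rfl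

lemma pair_shift (d1 : Ω1 →ₗ[ℝ] Ω2)
    (i1 : Vec A → Ω1 →ₗ[A] A) (i2 : Vec A → Ω2 →ₗ[A] Ω1)
    (hanti : ∀ (X Y : Vec A) (ω : Ω2), i1 X (i2 Y ω) = - i1 Y (i2 X ω))
    (B : Ω1) (x y : E1 A Ω1) :
    djPair i1 (x.1, x.2 + gaugeShift d1 i1 i2 B x.1)
      (y.1, y.2 + gaugeShift d1 i1 i2 B y.1) = djPair i1 x y := by
  simp only [djPair, gaugeShift, Prod.fst_add, Prod.snd_add, map_add, map_smul,
    smul_eq_mul]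
  rw [hanti x.1.1 y.1.1 (d1 B)]
  ring_nf

lemma dtil1_add (d0 : A →ₗ[ℝ] Ω1) (d1 : Ω1 →ₗ[ℝ] Ω2) (p q : Ω1 × A) :
    dtil1 d0 d1 (p + q) = dtil1 d0 d1 p + dtil1 d0 d1 q := by
  simp only [dtil1, Prod.fst_add, Prod.snd_add, map_add, Prod.mk_add_mk]
  rw [Prod.ext_iff]
  constructor <;> simp only [Prod.fst_add, Prod.snd_add] <;> abel

lemma itil21_add (i1 : Vec A → Ω1 →ₗ[A] A) (i2 : Vec A → Ω2 →ₗ[A] Ω1)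
    (Xf : Vec A × A) (p q : Ω2 × Ω1) :
    itil21 i1 i2 Xf (p + q) = itil21 i1 i2 Xf p + itil21 i1 i2 Xf q := by
  simp only [itil21, Prod.fst_add, Prod.snd_add, map_add, smul_add, Prod.mk_add_mk]
  rw [Prod.ext_iff]
  constructor <;> simp only [Prod.fst_add, Prod.snd_add] <;> abel

lemma Ltil1_add (d0 : A →ₗ[ℝ] Ω1) (d1 : Ω1 →ₗ[ℝ] Ω2)
    (i1 : Vec A → Ω1 →ₗ[A] A) (i2 : Vec A → Ω2 →ₗ[A] Ω1)
    (Xf : Vec A × A) (p q : Ω1 × A) :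
    Ltil1 d0 d1 i1 i2 Xf (p + q)
      = Ltil1 d0 d1 i1 i2 Xf p + Ltil1 d0 d1 i1 i2 Xf q := by
  simp only [Ltil1, dtil1_add, itil21_add, Prod.fst_add, Prod.snd_add, map_add,
    mul_add, Prod.mk_add_mk]
  rw [Prod.ext_iff]
  constructor <;> simp only [Prod.fst_add, Prod.snd_add] <;> abel

lemma dtil1_gauge (d0 : A →ₗ[ℝ] Ω1) (d1 : Ω1 →ₗ[ℝ] Ω2) (d2 : Ω2 →ₗ[ℝ] Ω3)
    (i1 : Vec A → Ω1 →ₗ[A] A) (i2 : Vec A → Ω2 →ₗ[A] Ω1) (i3 : Vec A → Ω3 →ₗ[A] Ω2)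
    (hdd : ∀ μ : Ω1, d2 (d1 μ) = 0) (B : Ω1) (Xf : Vec A × A) :
    dtil1 d0 d1 (gaugeShift d1 i1 i2 B Xf)
      = Ltil2 d0 d1 d2 i1 i2 i3 Xf (d1 B, B) := by
  simp only [Ltil2, gaugeShift_eq_itil, hdd, map_zero, sub_self, smul_zero,
    add_zero, neg_zero, Prod.mk_zero_zero, zero_add]

lemma dorfman_shift (d0 : A →ₗ[ℝ] Ω1) (d1 : Ω1 →ₗ[ℝ] Ω2) (d2 : Ω2 →ₗ[ℝ] Ω3)
    (i1 : Vec A → Ω1 →ₗ[A] A) (i2 : Vec A → Ω2 →ₗ[A] Ω1) (i3 : Vec A → Ω3 →ₗ[A] Ω2)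
    (hdd : ∀ μ : Ω1, d2 (d1 μ) = 0)
    (hCartan : ∀ (Xf Yh : Vec A × A) (p : Ω2 × Ω1),
      Ltil1 d0 d1 i1 i2 Xf (itil21 i1 i2 Yh p)
        - itil21 i1 i2 Yh (Ltil2 d0 d1 d2 i1 i2 i3 Xf p)
        = itil21 i1 i2 (⁅Xf.1, Yh.1⁆, Xf.1 Yh.2 - Yh.1 Xf.2) p)
    (B : Ω1) (x y : E1 A Ω1) :
    dorfman d0 d1 i1 i2 (x.1, x.2 + gaugeShift d1 i1 i2 B x.1)
        (y.1, y.2 + gaugeShift d1 i1 i2 B y.1)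
      = ((dorfman d0 d1 i1 i2 x y).1,
          (dorfman d0 d1 i1 i2 x y).2
            + gaugeShift d1 i1 i2 B (dorfman d0 d1 i1 i2 x y).1) := by
  have key := hCartan x.1 y.1 (d1 B, B)
  rw [← gaugeShift_eq_itil] at key
  simp only [dorfman, Ltil1_add, dtil1_add, itil21_add,
    dtil1_gauge d0 d1 d2 i1 i2 i3 hdd B x.1]
  rw [Prod.mk.injEq]
  refine ⟨rfl, ?_⟩
  have : gaugeShift d1 i1 i2 B (⁅x.1.1, y.1.1⁆, x.1.1 y.1.2 - y.1.1 x.1.2)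
      = Ltil1 d0 d1 i1 i2 x.1 (gaugeShift d1 i1 i2 B y.1)
        - itil21 i1 i2 y.1 (Ltil2 d0 d1 d2 i1 i2 i3 x.1 (d1 B, B)) := by
    rw [key, gaugeShift_eq_itil]
  rw [this]
  abel

/-- if `L` is a Dirac–Jacobi structure then so is its gauge
transformation `τ_B(L)` by any 1-form `B` (using that `d̃(dB,B) = 0` and the
Cartan calculus identities). -/
theorem tauDJ_isDiracJacobi
    (d0 : A →ₗ[ℝ] Ω1) (d1 : Ω1 →ₗ[ℝ] Ω2) (d2 : Ω2 →ₗ[ℝ] Ω3)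
    (i1 : Vec A → Ω1 →ₗ[A] A) (i2 : Vec A → Ω2 →ₗ[A] Ω1) (i3 : Vec A → Ω3 →ₗ[A] Ω2)
    (hdd : ∀ μ : Ω1, d2 (d1 μ) = 0)
    (hanti : ∀ (X Y : Vec A) (ω : Ω2), i1 X (i2 Y ω) = - i1 Y (i2 X ω))
    (hCartan : ∀ (Xf Yh : Vec A × A) (p : Ω2 × Ω1),
      Ltil1 d0 d1 i1 i2 Xf (itil21 i1 i2 Yh p)
        - itil21 i1 i2 Yh (Ltil2 d0 d1 d2 i1 i2 i3 Xf p)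
        = itil21 i1 i2 (⁅Xf.1, Yh.1⁆, Xf.1 Yh.2 - Yh.1 Xf.2) p)
    (B : Ω1) (L : Set (E1 A Ω1))
    (hL : IsDiracJacobi d0 d1 i1 i2 L) :
    IsDiracJacobi d0 d1 i1 i2 (tauDJ d1 i1 i2 B L) := by
  obtain ⟨hiso, hmax, hbr⟩ := hL
  refine ⟨?_, ?_, ?_⟩
  · rintro x ⟨x', hx', rfl⟩ y ⟨y', hy', rfl⟩
    rw [pair_shift d1 i1 i2 hanti B x' y']
    exact hiso x' hx' y' hy'
  · intro x hx
    have hx' : (x.1, x.2 - gaugeShift d1 i1 i2 B x.1) ∈ L := by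
      apply hmax
      intro y hy
      have h2 := pair_shift d1 i1 i2 hanti B (x.1, x.2 - gaugeShift d1 i1 i2 B x.1) y
      simp only [sub_add_cancel] at h2
      rw [← h2]
      exact hx (y.1, y.2 + gaugeShift d1 i1 i2 B y.1) ⟨y, hy, rfl⟩
    exact ⟨(x.1, x.2 - gaugeShift d1 i1 i2 B x.1), hx', by simp⟩
  · rintro x ⟨x', hx', rfl⟩ y ⟨y', hy', rfl⟩
    refine ⟨dorfman d0 d1 i1 i2 x' y', hbr x' hx' y' hy', ?_⟩
    exact dorfman_shift d0 d1 d2 i1 i2 i3 hdd hCartan B x' y'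
end

section
/- If $\eta$ is a contact form on $M$ with Jacobi structure $(\pi,E)$ and $B$ is a $(\pi,E)$-admissible 1-form, then the gauge-transformed map $(\pi_B,E_B)^\sharp$ is invertible with inverse $((\pi_B,E_B)^\sharp)^{-1} = ((\pi,E)^\sharp)^{-1} + \widetilde{(dB,B)}$; consequently the gauge transformation of the contact structure is the contact form $\eta_B = \eta - B$. -/
variable {A : Type} [CommRing A] {V : Type} [AddCommGroup V] [Module A V]

/-- The inverse of the sharp map of the Jacobi structure of a contact form `η`:
`(X,f) ↦ (-i_X dη - fη, η(X))`, where `dEta X` models `i_X dη`. -/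
def contactInv (dEta : V →ₗ[A] Module.Dual A V) (η : Module.Dual A V)
    (q : V × A) : Module.Dual A V × A :=
  (- dEta q.1 - q.2 • η, η q.1)

/-- The bundle map `(dB,B)~ : TM × ℝ → T*M × ℝ`, `(X,f) ↦ (i_X dB + fB, -B(X))`. -/
def tilForm (dBm : V →ₗ[A] Module.Dual A V) (B : Module.Dual A V)
    (q : V × A) : Module.Dual A V × A :=
  (dBm q.1 + q.2 • B, - B q.1)

/-- for a contact form `η` with Jacobi structure `(π,E)` and a
`(π,E)`-admissible 1-form `B` (with `Φ = Id + (dB,B)~ ∘ (π,E)^♯` invertible, with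
inverse `Ψ`), the gauge transform `(π_B,E_B)^♯ = (π,E)^♯ ∘ Ψ` is invertible with
inverse `((π,E)^♯)⁻¹ + (dB,B)~`; this inverse is exactly the contact inverse of
the 1-form `η_B = η - B`, so the gauge transform of the contact structure is the
contact form `η - B`. -/
theorem gauge_contact
    (η B : Module.Dual A V)
    (dEta dBm : V →ₗ[A] Module.Dual A V)
    (hantiη : ∀ X Y : V, dEta X Y = - dEta Y X)
    (hantiB : ∀ X Y : V, dBm X Y = - dBm Y X)
    (J : Module.Dual A V × A → V × A)
    (hJ₁ : ∀ q : V × A, J (contactInv dEta η q) = q)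
    (hJ₂ : ∀ p : Module.Dual A V × A, contactInv dEta η (J p) = p)
    (Ψ : Module.Dual A V × A → Module.Dual A V × A)
    (hΨ₁ : ∀ p, (Ψ p) + tilForm dBm B (J (Ψ p)) = p)
    (hΨ₂ : ∀ p, Ψ (p + tilForm dBm B (J p)) = p) :
    (∀ q : V × A, J (Ψ (contactInv dEta η q + tilForm dBm B q)) = q) ∧
    (∀ p : Module.Dual A V × A,
      contactInv dEta η (J (Ψ p)) + tilForm dBm B (J (Ψ p)) = p) ∧
    (∀ q : V × A,
      contactInv dEta η q + tilForm dBm B q = contactInv (dEta - dBm) (η - B) q) := by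
  refine ⟨fun q => ?_, fun p => ?_, fun q => ?_⟩
  · have h : tilForm dBm B q = tilForm dBm B (J (contactInv dEta η q)) := by rw [hJ₁]
    rw [h, hΨ₂, hJ₁]
  · rw [hJ₂]; exact hΨ₁ p
  · simp only [contactInv, tilForm, Prod.mk_add_mk, Prod.mk.injEq, LinearMap.sub_apply,
      smul_sub]
    constructor
    · ext X
      simp only [LinearMap.add_apply, LinearMap.neg_apply, LinearMap.sub_apply,
        LinearMap.smul_apply]
      ring
    · ring
end

section
/- Any two contact structures $\eta, \eta'$ on a manifold $M$ are gauge equivalent: setting $B = \eta - \eta'$, the difference of the inverses of the associated Jacobi sharp maps is $((\pi',E')^\sharp)^{-1} - ((\pi,E)^\sharp)^{-1} = \widetilde{(dB,B)}$, the map $Id + \widetilde{(dB,B)}\circ(\pi,E)^\sharp$ is invertible, and $\tau_B(\pi,E) = (\pi',E')$. -/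
variable {A : Type} [CommRing A] {V : Type} [AddCommGroup V] [Module A V]

/-- any two contact structures `η, η'` on `M` are gauge equivalent.
With `B = η - η'` (so that `i_X dB` is modelled by `(dEta - dEta') X`):
the difference of the inverses of the associated sharp maps is `(dB,B)~`, the map
`Φ = Id + (dB,B)~ ∘ (π,E)^♯` is invertible, and `τ_B(π,E) = (π',E')`, i.e.
`(π,E)^♯ ∘ Φ⁻¹ = (π',E')^♯`. -/
theorem contact_gauge_equivalent
    (η η' : Module.Dual A V)
    (dEta dEta' : V →ₗ[A] Module.Dual A V)
    (hantiη : ∀ X Y : V, dEta X Y = - dEta Y X)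
    (hantiη' : ∀ X Y : V, dEta' X Y = - dEta' Y X)
    (J J' : Module.Dual A V × A → V × A)
    (hJ₁ : ∀ q : V × A, J (contactInv dEta η q) = q)
    (hJ₂ : ∀ p : Module.Dual A V × A, contactInv dEta η (J p) = p)
    (hJ'₁ : ∀ q : V × A, J' (contactInv dEta' η' q) = q)
    (hJ'₂ : ∀ p : Module.Dual A V × A, contactInv dEta' η' (J' p) = p) :
    (∀ q : V × A,
      contactInv dEta' η' q - contactInv dEta η q
        = tilForm (dEta - dEta') (η - η') q) ∧
    Function.Bijective (fun p => p + tilForm (dEta - dEta') (η - η') (J p)) ∧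
    (∃ Ψ : Module.Dual A V × A → Module.Dual A V × A,
      (∀ p, (Ψ p) + tilForm (dEta - dEta') (η - η') (J (Ψ p)) = p) ∧
      (∀ p, Ψ (p + tilForm (dEta - dEta') (η - η') (J p)) = p) ∧
      (∀ p, J (Ψ p) = J' p)) := by
  have key : ∀ q : V × A,
      contactInv dEta η q + tilForm (dEta - dEta') (η - η') q
        = contactInv dEta' η' q := by
    intro q
    simp only [contactInv, tilForm, Prod.mk_add_mk, Prod.mk.injEq,
      LinearMap.sub_apply, smul_sub, map_sub, LinearMap.map_smul]
    refine ⟨by abel, by simp [sub_eq_iff_eq_add]⟩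
  have hdiff : ∀ q : V × A,
      contactInv dEta' η' q - contactInv dEta η q
        = tilForm (dEta - dEta') (η - η') q := by
    intro q; rw [← key q]; abel
  have hΦ : ∀ p, p + tilForm (dEta - dEta') (η - η') (J p)
      = contactInv dEta' η' (J p) := by
    intro p
    have h := key (J p)
    rwa [hJ₂] at h
  refine ⟨hdiff, ?_, ?_⟩
  · constructor
    · intro p q h
      simp only [hΦ] at h
      have := congrArg J' h
      rw [hJ'₁, hJ'₁] at this
      rw [← hJ₂ p, ← hJ₂ q, this]
    · intro p
      refine ⟨contactInv dEta η (J' p), ?_⟩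
      simp only []
      rw [hJ₁, key, hJ'₂]
  · refine ⟨fun p => contactInv dEta η (J' p), ?_, ?_, ?_⟩
    · intro p; simp only []; rw [hJ₁, key, hJ'₂]
    · intro p; simp only []; rw [hΦ, hJ'₁, hJ₂]
    · intro p; simp only []; rw [hJ₁]
end

section
/- Let $G \rightrightarrows M$ be a groupoid with multiplicative function $\sigma$ (i.e., $\sigma(gh) = \sigma(g) + \sigma(h)$ for composable $g,h$), $\eta$ a 1-form on $G$ satisfying the contact-groupoid multiplicativity $\eta_{gh}(X_g\oplus Y_h) = \eta_g(X_g) + e^{\sigma(g)}\eta_h(Y_h)$, and $B$ a 1-form on $M$. Then $\eta_B := \eta - e^\sigma\alpha^*B + \beta^*B$ also satisfies the multiplicativity condition: $(\eta_B)_{gh}(X_g\oplus Y_h) = (\eta_B)_g(X_g) + e^{\sigma(g)}(\eta_B)_h(Y_h)$ for all composable tangent vectors, using that $\alpha_*(X_g\oplus Y_h) = \alpha_*(Y_h)$, $\beta_*(X_g\oplus Y_h) = \beta_*(X_g)$, $\alpha_*(X_g) = \beta_*(Y_h)$, and $\sigma(gh) = \sigma(g)+\sigma(h)$. -/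
/-! Abstract model of a Lie groupoid `G ⇉ M` with source `αG`, target `βG`,
multiplication `mulG`, its tangent groupoid `TG ⇉ TM` with source `αt`, target
`βt`, multiplication `oplus`, and base-point projection `base : TG → G`. -/

/-- if `σ` is multiplicative, `η` satisfies the contact-groupoid
multiplicativity `η(X_g ⊕ Y_h) = η(X_g) + e^{σ(g)} η(Y_h)`, and `B` is a 1-form
on `M`, then `η_B = η - e^σ α*B + β*B` again satisfies the multiplicativity
condition. -/
theorem gauge_multiplicative_contact_form
    (G M TG TM : Type)
    (base : TG → G) (mulG : G → G → G)
    (αt βt : TG → TM) (αG βG : G → M)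
    (oplus : TG → TG → TG)
    (σ : G → ℝ) (η : TG → ℝ) (B : TM → ℝ)
    -- the tangent groupoid structure
    (hbase : ∀ X Y : TG, αt X = βt Y → base (oplus X Y) = mulG (base X) (base Y))
    (hcompbase : ∀ X Y : TG, αt X = βt Y → αG (base X) = βG (base Y))
    (hα : ∀ X Y : TG, αt X = βt Y → αt (oplus X Y) = αt Y)
    (hβ : ∀ X Y : TG, αt X = βt Y → βt (oplus X Y) = βt X)
    -- multiplicativity of `σ`
    (hσ : ∀ g h : G, αG g = βG h → σ (mulG g h) = σ g + σ h)
    -- multiplicativity of `η`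
    (hη : ∀ X Y : TG, αt X = βt Y →
      η (oplus X Y) = η X + Real.exp (σ (base X)) * η Y) :
    ∀ X Y : TG, αt X = βt Y →
      (fun Z => η Z - Real.exp (σ (base Z)) * B (αt Z) + B (βt Z)) (oplus X Y)
        = (fun Z => η Z - Real.exp (σ (base Z)) * B (αt Z) + B (βt Z)) X
          + Real.exp (σ (base X))
            * (fun Z => η Z - Real.exp (σ (base Z)) * B (αt Z) + B (βt Z)) Y := by
  intro X Y hXY
  simp only []
  rw [hη X Y hXY, hα X Y hXY, hβ X Y hXY, hbase X Y hXY,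
    hσ (base X) (base Y) (hcompbase X Y hXY), hXY, Real.exp_add]
  ring
end
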